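/- For any fixed integer k ≥ 1 and nonnegative integers a_1,…,a_m, the m×m matrix with (i,j)-entry (-1)^{a_i+a_j} · S(a_i+a_j+k, k)/C(a_i+a_j+k, k) has nonnegative determinant. -/

import Mathlib

/-!
If `U₁, …, U_k` are independent and uniform on `[0, 1]`, then
`E[(U₁ + ⋯ + U_k)ⁿ] = S(n + k, k) / C(n + k, k)`. Integrating out one coordinate expresses the
moments for `k + 1` as binomial sums of those for `k`, and on the Stirling side this is the
classical identity `S(N + 1, k + 1) = ∑_j C(N, j) S(j, k)`. The matrix is therefore the Gram
matrix of the functions `(-(U₁ + ⋯ + U_k))^{a_i}` in `L²`, hence positive semidefinite.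
-/

/-- Stirling numbers of the second kind. -/
def S : ℕ → ℕ → ℕ
  | 0, 0 => 1
  | 0, _ + 1 => 0
  | _ + 1, 0 => 0
  | n + 1, k + 1 => (k + 1) * S n (k + 1) + S n k

theorem S_eq_stirlingSecond : ∀ n k, S n k = Nat.stirlingSecond n k
  | 0, 0 | 0, _ + 1 | _ + 1, 0 => rfl
  | n + 1, k + 1 => by
    rw [S, Nat.stirlingSecond_succ_succ, S_eq_stirlingSecond n (k + 1), S_eq_stirlingSecond n k]

open MeasureTheory Finset
open scoped unitInterval

namespace Nat

theorem stirlingSecond_succ_succ_eq_sum (N k : ℕ) :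
    stirlingSecond (N + 1) (k + 1) = ∑ j ∈ range (N + 1), N.choose j * stirlingSecond j k := by
  induction N generalizing k with
  | zero => cases k <;> rfl
  | succ N ih =>
    have h := sum_choose_succ_mul (R := ℕ) (fun j _ => stirlingSecond j k) N
    simp only [cast_id] at h
    rw [h, ← ih]
    cases k with
    | zero => simp [stirlingSecond_one_right]
    | succ k =>
      simp only [stirlingSecond_succ_succ, mul_add, sum_add_distrib, ← ih, mul_left_comm _ (k + 1),
        ← mul_sum]
      ring

theorem succ_mul_stirlingSecond_add_eq_sum (n k : ℕ) :
    (k + 1) * stirlingSecond (n + k + 1) (k + 1) =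
      ∑ j ∈ range (n + 1), (n + k + 1).choose (j + k) * stirlingSecond (j + k) k := by
  have h := stirlingSecond_succ_succ_eq_sum (n + k + 1) k
  rw [sum_range_succ, choose_self, one_mul, stirlingSecond_succ_succ, add_left_inj] at h
  rw [h, show n + k + 1 = k + (n + 1) by omega, sum_range_add,
    sum_eq_zero fun j hj => by rw [stirlingSecond_eq_zero_of_lt (mem_range.1 hj), mul_zero],
    zero_add]
  simp only [add_comm k]

theorem choose_add_mul_choose (n k j : ℕ) (hj : j ≤ n) :
    (n + k + 1).choose (j + k) * (j + k).choose k = (n + k + 1).choose k * (n + 1).choose j := by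
  rw [choose_mul (le_add_self), show n + k + 1 - k = n + 1 by omega, Nat.add_sub_cancel]

theorem stirlingSecond_div_choose_succ (n k : ℕ) :
    (stirlingSecond (n + (k + 1)) (k + 1) : ℝ) / (n + (k + 1)).choose (k + 1) =
      (∑ j ∈ range (n + 1), (n + 1).choose j *
        ((stirlingSecond (j + k) k : ℝ) / (j + k).choose k)) / (n + 1) := by
  have hterm : ∀ j ∈ range (n + 1), ((n + 1).choose j : ℝ) *
      ((stirlingSecond (j + k) k : ℝ) / (j + k).choose k) =
      (n + k + 1).choose (j + k) * stirlingSecond (j + k) k / (n + k + 1).choose k := by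
    intro j hj
    have h : ((n + k + 1).choose (j + k) : ℝ) * (j + k).choose k =
        (n + k + 1).choose k * (n + 1).choose j := by
      exact_mod_cast choose_add_mul_choose n k j (le_of_lt_succ (mem_range.1 hj))
    rw [mul_div_assoc', div_eq_div_iff (cast_ne_zero.2 (choose_ne_zero le_add_self))
      (cast_ne_zero.2 (choose_ne_zero (by omega)))]
    linear_combination -(stirlingSecond (j + k) k : ℝ) * h
  have hchoose : ((n + k + 1).choose (k + 1) : ℝ) * (k + 1) = (n + k + 1).choose k * (n + 1) := by
    have := choose_succ_right_eq (n + k + 1) k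
    rw [show n + k + 1 - k = n + 1 by omega] at this
    exact_mod_cast this
  have hsum : ((k : ℝ) + 1) * stirlingSecond (n + k + 1) (k + 1) =
      ∑ j ∈ range (n + 1), ((n + k + 1).choose (j + k) : ℝ) * stirlingSecond (j + k) k := by
    exact_mod_cast succ_mul_stirlingSecond_add_eq_sum n k
  rw [sum_congr rfl hterm, ← sum_div, ← hsum, ← add_assoc]
  have : ((n + k + 1).choose (k + 1) : ℝ) ≠ 0 := cast_ne_zero.2 (choose_ne_zero (by omega))
  have : ((n + k + 1).choose k : ℝ) ≠ 0 := cast_ne_zero.2 (choose_ne_zero (by omega))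
  field_simp
  linear_combination -(stirlingSecond (n + k + 1) (k + 1) : ℝ) * hchoose

end Nat

namespace unitInterval

theorem integral_eq_intervalIntegral (f : ℝ → ℝ) :
    ∫ t : I, f t = ∫ t in (0 : ℝ)..1, f t := by
  rw [integral_subtype measurableSet_Icc f, integral_Icc_eq_integral_Ioc,
    intervalIntegral.integral_of_le zero_le_one]

theorem integral_add_pow (s : ℝ) (n : ℕ) :
    ∫ t : I, ((t : ℝ) + s) ^ n = (∑ j ∈ range (n + 1), (n + 1).choose j * s ^ j) / (n + 1) := by
  rw [integral_eq_intervalIntegral (fun t => (t + s) ^ n),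
    intervalIntegral.integral_comp_add_right (· ^ n), integral_pow, zero_add, add_comm 1 s,
    add_pow, sum_range_succ]
  simp only [one_pow, mul_one, Nat.choose_self, Nat.cast_one, add_sub_cancel_right, mul_comm]

theorem integral_comp_sum_fin_succ {k : ℕ} (f : ℝ → ℝ) (hf : Continuous f) :
    ∫ x : Fin (k + 1) → I, f (∑ i, (x i : ℝ)) =
      ∫ y : Fin k → I, ∫ t : I, f (t + ∑ i, (y i : ℝ)) := by
  set g : I × (Fin k → I) → ℝ := fun z => f (z.1 + ∑ i, (z.2 i : ℝ))
  have hg : Continuous g := by fun_prop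
  calc ∫ x : Fin (k + 1) → I, f (∑ i, (x i : ℝ))
      = ∫ x : Fin (k + 1) → I, g (MeasurableEquiv.piFinSuccAbove (fun _ => I) 0 x) := by
        simp only [g, Fin.sum_univ_succ]; rfl
    _ = ∫ z, g z ∂(volume.prod volume) :=
        (volume_preserving_piFinSuccAbove (fun _ : Fin (k + 1) => I) 0).integral_comp
          (MeasurableEquiv.measurableEmbedding _) g
    _ = ∫ y : Fin k → I, ∫ t : I, f (t + ∑ i, (y i : ℝ)) :=
        integral_prod_symm g (hg.integrable_of_hasCompactSupport (.of_compactSpace g))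

theorem integral_sum_pow (k n : ℕ) :
    ∫ x : Fin k → I, (∑ i, (x i : ℝ)) ^ n =
      (Nat.stirlingSecond (n + k) k : ℝ) / (n + k).choose k := by
  induction k generalizing n with
  | zero => cases n <;> simp
  | succ k ih =>
    have hint : ∀ j, Integrable (fun y : Fin k → I => (∑ i, (y i : ℝ)) ^ j) :=
      fun j => (by fun_prop : Continuous _).integrable_of_hasCompactSupport (.of_compactSpace _)
    simp_rw [integral_comp_sum_fin_succ (· ^ n) (continuous_pow n), integral_add_pow, integral_div,
      integral_finsetSum _ fun j _ => (hint j).const_mul _, integral_const_mul, ih,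
      Nat.stirlingSecond_div_choose_succ]

end unitInterval

theorem Matrix.posSemidef_of_integral_mul {α ι : Type*} [MeasurableSpace α] {μ : Measure α}
    [Fintype ι] {f : ι → α → ℝ} (hf : ∀ i, MemLp (f i) 2 μ) :
    (Matrix.of fun i j => ∫ x, f i x * f j x ∂μ).PosSemidef := by
  have hgram : (Matrix.of fun i j => ∫ x, f i x * f j x ∂μ) =
      Matrix.gram ℝ fun i => (hf i).toLp := by
    ext i j
    rw [Matrix.of_apply, Matrix.gram_apply, L2.inner_def]
    refine integral_congr_ae ?_
    filter_upwards [(hf i).coeFn_toLp, (hf j).coeFn_toLp] with x hi hj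
    rw [hi, hj, Real.inner_apply]
  rw [hgram]
  exact Matrix.posSemidef_gram ℝ _

theorem stirling2_signed_ratio_matrix_det_nonneg_general (k : ℕ) (m : ℕ)
    (a : Fin m → ℕ) :
    0 ≤ (Matrix.of fun i j : Fin m =>
          (-1 : ℝ) ^ (a i + a j) *
            ((S (a i + a j + k) k : ℝ) / ((a i + a j + k).choose k : ℝ))).det := by
  set g : Fin m → (Fin k → I) → ℝ := fun i x => (-∑ t, (x t : ℝ)) ^ a i
  have hgram : (Matrix.of fun i j : Fin m =>
      (-1 : ℝ) ^ (a i + a j) * ((S (a i + a j + k) k : ℝ) / ((a i + a j + k).choose k : ℝ))) =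
      Matrix.of fun i j => ∫ x, g i x * g j x := by
    ext i j
    have hprod : ∀ x, g i x * g j x = (-1) ^ (a i + a j) * (∑ t, (x t : ℝ)) ^ (a i + a j) :=
      fun x => by rw [← pow_add, neg_pow]
    rw [Matrix.of_apply, Matrix.of_apply, integral_congr_ae (.of_forall hprod),
      integral_const_mul, unitInterval.integral_sum_pow, S_eq_stirlingSecond]
  rw [hgram]
  refine (Matrix.posSemidef_of_integral_mul fun i => ?_).det_nonneg
  exact (by fun_prop : Continuous (g i)).memLp_of_hasCompactSupport (.of_compactSpace _)

/-- The matrix with entries `(-1)^{a_i+a_j} S(a_i+a_j+k,k)/C(a_i+a_j+k,k)` has nonnegative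
determinant. -/
theorem stirling2_signed_ratio_matrix_det_nonneg (k : ℕ) (hk : 1 ≤ k) (m : ℕ)
    (a : Fin m → ℕ) :
    0 ≤ (Matrix.of fun i j : Fin m =>
          (-1 : ℝ) ^ (a i + a j) *
            ((S (a i + a j + k) k : ℝ) / ((a i + a j + k).choose k : ℝ))).det :=
  stirling2_signed_ratio_matrix_det_nonneg_general k m a
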